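/- For k ≥ 3 and n = 2k, the graph H(2k, k) is not 2-geodesic transitive: there exist two 2-geodesics ∅ ~ A ~ B and ∅ ~ A ~ [n] starting from ∅ (with |B| = 2, A of size k) such that no automorphism of H(2k,k) fixes ∅, and maps the first geodesic to the second, because a vertex of size 2 has 2·C(2k−2, k−1) neighbours of size k while [n] has C(2k, k) neighbours of size k, and these counts differ for k ≥ 3. -/

import Mathlib

/-!
An automorphism `φ` of `H(n,k)` with `φ ∅ = ∅` and `φ B = [n]` maps the common neighbours
of `∅` and `B` bijectively onto those of `∅` and `[n]`. For `n = 2k` the latter are all `k`-sets,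
whereas a `k`-set is adjacent to a `2`-set `B` iff it meets `B` in exactly one point, so the two
counts are `C(2k,k)` and `2·C(2k-2,k-1)`. Pascal's rule twice gives
`C(2k,k) = C(2k-2,k-2) + 2·C(2k-2,k-1) + C(2k-2,k)`, so they differ as soon as `k ≥ 2`.
-/

open Finset symmDiff

/-- The graph `H(n,k)` on subsets of `[n]`: `X ~ Y` iff `|X ∆ Y| = k`. -/
def HGraph (n k : ℕ) : SimpleGraph (Finset (Fin n)) where
  Adj X Y := (X ∆ Y).card = k ∧ X ≠ Y
  symm := by
    constructor
    intro X Y h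
    exact ⟨by rw [symmDiff_comm]; exact h.1, h.2.symm⟩
  loopless := ⟨fun X h => h.2 rfl⟩

theorem Nat.two_mul_choose_lt_choose {k : ℕ} (hk : 2 ≤ k) :
    2 * (2 * k - 2).choose (k - 1) < (2 * k).choose k := by
  obtain ⟨m, rfl⟩ := Nat.exists_eq_add_of_le' hk
  rw [show 2 * (m + 2) - 2 = 2 * m + 2 by omega, show m + 2 - 1 = m + 1 by omega,
    show 2 * (m + 2) = 2 * m + 2 + 1 + 1 by ring, Nat.choose_succ_succ' (2 * m + 2 + 1),
    Nat.choose_succ_succ' (2 * m + 2) m, Nat.choose_succ_succ' (2 * m + 2) (m + 1)]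
  have := Nat.choose_pos (show m ≤ 2 * m + 2 by omega)
  omega

theorem Finset.card_symmDiff_add_two_mul_card_inter {α : Type*} [DecidableEq α]
    (s t : Finset α) :
    #(s ∆ t) + 2 * #(s ∩ t) = #s + #t := by
  rw [symmDiff_eq_sup_sdiff_inf, sup_eq_union, inf_eq_inter,
    card_sdiff_of_subset inter_subset_union, ← card_inter_add_card_union s t]
  have := card_le_card (inter_subset_union (s := s) (t := t))
  omega

theorem Finset.card_filter_card_inter_card_sdiff {α : Type*} [Fintype α] [DecidableEq α]
    (B : Finset α) (i j : ℕ) :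
    #{Y : Finset α | #(Y ∩ B) = i ∧ #(Y \ B) = j} =
      (#B).choose i * (Fintype.card α - #B).choose j := by
  rw [← card_compl, ← card_powersetCard i B, ← card_powersetCard j Bᶜ, ← card_product]
  have union_inter (P Q : Finset α) (hP : P ⊆ B) (hQ : Q ⊆ Bᶜ) : (P ∪ Q) ∩ B = P := by
    ext x; have := @hP x; have := @hQ x; simp only [mem_compl] at *; grind
  have union_sdiff (P Q : Finset α) (hP : P ⊆ B) (hQ : Q ⊆ Bᶜ) : (P ∪ Q) \ B = Q := by
    ext x; have := @hP x; have := @hQ x; simp only [mem_compl] at *; grind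
  refine card_nbij' (fun Y ↦ (Y ∩ B, Y \ B)) (fun p ↦ p.1 ∪ p.2) ?_ ?_ ?_ ?_
  · intro Y hY
    simp only [coe_filter, mem_univ, true_and, Set.mem_ofPred_eq] at hY
    simp only [coe_product, Set.mem_prod, mem_coe, mem_powersetCard]
    exact ⟨⟨inter_subset_right, hY.1⟩, ⟨fun x hx ↦ mem_compl.2 (mem_sdiff.1 hx).2, hY.2⟩⟩
  · rintro ⟨P, Q⟩ hPQ
    simp only [coe_product, Set.mem_prod, mem_coe, mem_powersetCard] at hPQ
    simp only [coe_filter, mem_univ, true_and, Set.mem_ofPred_eq]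
    rw [union_inter P Q hPQ.1.1 hPQ.2.1, union_sdiff P Q hPQ.1.1 hPQ.2.1]
    exact ⟨hPQ.1.2, hPQ.2.2⟩
  · intro Y _
    exact sup_inf_sdiff Y B
  · rintro ⟨P, Q⟩ hPQ
    simp only [coe_product, Set.mem_prod, mem_coe, mem_powersetCard] at hPQ
    simp only [union_inter P Q hPQ.1.1 hPQ.2.1, union_sdiff P Q hPQ.1.1 hPQ.2.1]

theorem Finset.exists_card_eq_card_eq_two_card_inter_eq_one {α : Type*} [Fintype α]
    [DecidableEq α] {k : ℕ} (hk : 0 < k) (hkα : k < Fintype.card α) :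
    ∃ A B : Finset α, #A = k ∧ #B = 2 ∧ #(A ∩ B) = 1 := by
  obtain ⟨A, -, hA⟩ := exists_subset_card_eq (s := (univ : Finset α)) (n := k) hkα.le
  obtain ⟨a, haA⟩ := card_pos.1 (hA ▸ hk)
  obtain ⟨b, -, hbA⟩ := exists_mem_notMem_of_card_lt_card (s := A) (t := univ) (hA ▸ hkα)
  refine ⟨A, {a, b}, hA, card_pair (ne_of_mem_of_not_mem haA hbA), ?_⟩
  rw [inter_insert_of_mem haA, inter_singleton_of_notMem hbA]
  rfl

namespace SimpleGraph

theorem dist_eq_two_of_adj_of_adj {V : Type*} {G : SimpleGraph V} {u w v : V}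
    (huw : G.Adj u w) (hwv : G.Adj w v) (hne : u ≠ v) (hnadj : ¬G.Adj u v) :
    G.dist u v = 2 := by
  rw [dist, edist_eq_two_iff.2 ⟨hne, hnadj, w, huw, hwv.symm⟩]
  rfl

theorem Iso.ncard_commonNeighbors {V W : Type*} {G : SimpleGraph V} {G' : SimpleGraph W}
    (φ : G ≃g G') (u v : V) :
    (G'.commonNeighbors (φ u) (φ v)).ncard = (G.commonNeighbors u v).ncard := by
  rw [← Set.ncard_image_of_injective _ φ.injective]
  congr 1
  ext w
  obtain ⟨x, rfl⟩ := φ.surjective w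
  simp [mem_commonNeighbors, φ.map_adj_iff]

end SimpleGraph

namespace HGraph

variable {n k : ℕ}

theorem adj_iff (hk : k ≠ 0) {X Y : Finset (Fin n)} :
    (HGraph n k).Adj X Y ↔ #(X ∆ Y) = k := by
  refine ⟨And.left, fun h ↦ ⟨h, fun hXY ↦ ?_⟩⟩
  simp [hXY] at h
  omega

theorem adj_empty_iff (hk : k ≠ 0) {Y : Finset (Fin n)} : (HGraph n k).Adj ∅ Y ↔ #Y = k := by
  rw [adj_iff hk, ← bot_eq_empty, bot_symmDiff]

theorem adj_univ_iff (hk : k ≠ 0) (hn : n = 2 * k) {Y : Finset (Fin n)} :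
    (HGraph n k).Adj Y univ ↔ #Y = k := by
  rw [adj_iff hk, ← top_eq_univ, symmDiff_top, hnot_eq_compl, card_compl, Fintype.card_fin]
  have := card_le_univ Y
  simp only [Fintype.card_fin] at this
  omega

theorem ncard_commonNeighbors_empty_univ (hk : k ≠ 0) (hn : n = 2 * k) :
    ((HGraph n k).commonNeighbors ∅ univ).ncard = n.choose k := by
  have hcn :
      (HGraph n k).commonNeighbors ∅ univ = ↑(powersetCard k (univ : Finset (Fin n))) := by
    ext Y
    rw [SimpleGraph.mem_commonNeighbors, adj_empty_iff hk, (HGraph n k).adj_comm univ Y,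
      adj_univ_iff hk hn, mem_coe, mem_powersetCard_univ, and_self]
  rw [hcn, Set.ncard_coe_finset, card_powersetCard, card_univ, Fintype.card_fin]

theorem ncard_commonNeighbors_empty_of_card_eq_two (hk : k ≠ 0) {B : Finset (Fin n)}
    (hB : #B = 2) :
    ((HGraph n k).commonNeighbors ∅ B).ncard = 2 * (n - 2).choose (k - 1) := by
  have hcn : (HGraph n k).commonNeighbors ∅ B =
      ↑({Y | #(Y ∩ B) = 1 ∧ #(Y \ B) = k - 1} : Finset (Finset (Fin n))) := by
    ext Y
    have := card_symmDiff_add_two_mul_card_inter B Y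
    rw [inter_comm] at this
    have := card_inter_add_card_sdiff Y B
    simp only [SimpleGraph.mem_commonNeighbors, adj_empty_iff hk, adj_iff hk, coe_filter,
      mem_univ, true_and, Set.mem_ofPred_eq]
    omega
  rw [hcn, Set.ncard_coe_finset, card_filter_card_inter_card_sdiff, hB, Fintype.card_fin]
  rfl

end HGraph

/-- For `k ≥ 3` and `n = 2k`, `H(2k,k)` is not `2`-geodesic transitive: since
`2·C(2k-2,k-1) ≠ C(2k,k)`, there are `2`-geodesics `∅ ~ A ~ B` and `∅ ~ A ~ [n]`
(with `|A| = k`, `|B| = 2`) such that no automorphism fixes `∅` and maps the first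
geodesic onto the second. -/
theorem stmt_19 (k n : ℕ) (hk : 3 ≤ k) (hn : n = 2 * k) :
    2 * Nat.choose (2 * k - 2) (k - 1) ≠ Nat.choose (2 * k) k ∧
    ∃ A B : Finset (Fin n), A.card = k ∧ B.card = 2 ∧
      (HGraph n k).Adj ∅ A ∧ (HGraph n k).Adj A B ∧ (HGraph n k).Adj A Finset.univ ∧
      (HGraph n k).dist ∅ B = 2 ∧ (HGraph n k).dist ∅ Finset.univ = 2 ∧
      ¬ ∃ φ : HGraph n k ≃g HGraph n k, φ ∅ = ∅ ∧ φ A = A ∧ φ B = Finset.univ := by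
  have hk0 : k ≠ 0 := by omega
  have hcount := (Nat.two_mul_choose_lt_choose (by omega : 2 ≤ k)).ne
  obtain ⟨A, B, hA, hB, hAB⟩ :=
    exists_card_eq_card_eq_two_card_inter_eq_one (α := Fin n) (k := k) (by omega) (by simp; omega)
  have hadjA : (HGraph n k).Adj ∅ A := (HGraph.adj_empty_iff hk0).2 hA
  have hadjB : (HGraph n k).Adj A B := by
    have := card_symmDiff_add_two_mul_card_inter A B
    rw [HGraph.adj_iff hk0]
    omega
  have hadjU : (HGraph n k).Adj A univ := (HGraph.adj_univ_iff hk0 hn).2 hA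
  refine ⟨hcount, A, B, hA, hB, hadjA, hadjB, hadjU, ?_, ?_, ?_⟩
  · refine SimpleGraph.dist_eq_two_of_adj_of_adj hadjA hadjB (by rintro rfl; simp at hB) ?_
    rw [HGraph.adj_empty_iff hk0]
    omega
  · refine SimpleGraph.dist_eq_two_of_adj_of_adj hadjA hadjU
      (univ_nonempty_iff.2 ⟨⟨0, by omega⟩⟩).ne_empty.symm ?_
    rw [HGraph.adj_empty_iff hk0, card_univ, Fintype.card_fin]
    omega
  · rintro ⟨φ, h0, -, hBU⟩
    have hcn := φ.ncard_commonNeighbors ∅ B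
    rw [h0, hBU, HGraph.ncard_commonNeighbors_empty_univ hk0 hn,
      HGraph.ncard_commonNeighbors_empty_of_card_eq_two hk0 hB, hn] at hcn
    exact hcount hcn.symm
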